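/- Suppose that for every ε > 0 one has R(T) = O_ε(T^{1/2+ε}), i.e. there is C(ε) with |R(T)| ≤ C(ε) T^{1/2+ε} for all T ≥ 2. Then for every ε > 0 one has E*(T) = O_ε(T^{1/4+ε}); equivalently, E(T) = 2πΔ*(T/(2π)) + O_ε(T^{1/4+ε}). -/

import Mathlib

open Real MeasureTheory Finset

/-- Error term in the Dirichlet divisor problem. -/
noncomputable def divDelta (x : ℝ) : ℝ :=
  (∑ n ∈ Finset.Icc 1 ⌊x⌋₊, (n.divisors.card : ℝ))
    - x * (Real.log x + 2 * Real.eulerMascheroniConstant - 1)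

/-- Error term in the mean square of zeta on the critical line. -/
noncomputable def zetaE (T : ℝ) : ℝ :=
  (∫ t in (0:ℝ)..T, ‖riemannZeta (1/2 + Complex.I * t)‖ ^ 2)
    - T * (Real.log (T / (2 * Real.pi)) + 2 * Real.eulerMascheroniConstant - 1)

/-- The modified divisor error term Δ*. -/
noncomputable def divDeltaStar (x : ℝ) : ℝ :=
  -divDelta x + 2 * divDelta (2 * x) - (1/2) * divDelta (4 * x)

/-- E*(t) = E(t) - 2π Δ*(t/(2π)). -/
noncomputable def zetaEStar (t : ℝ) : ℝ :=
  zetaE t - 2 * Real.pi * divDeltaStar (t / (2 * Real.pi))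

/-- R(T), defined by ∫₀ᵀ E*(t) dt = (3π/4) T + R(T). -/
noncomputable def Rerr (T : ℝ) : ℝ :=
  (∫ t in (0:ℝ)..T, zetaEStar t) - 3 * Real.pi / 4 * T

/-! Unconditionally `E*` can only drop slowly. `E` is an increasing integral minus a smooth
main term, and the divisor bound `d(n) ≪ n^ε` makes `Δ*` vary by `≪ (h + 1) x^ε` over intervals
of length `h`; hence `E*(s) - E*(t) ≪_ε (t - s + 1) t^ε` for `s ≤ t`. Averaging `E*` over
`[T, T + H]` and over `[T - H, T]` bounds `|E*(T) - 3π/4|` by this drop plus `2 max |R| / H`, and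
`H = T^{1/4}` makes both `≪ T^{1/4+ε}`. For bounded `T`, `E*` is bounded, being a combination of
continuous and monotone functions. -/

lemma natCast_add_one_le_div_mul_pow {r : ℝ} (hr : 1 < r) (a : ℕ) :
    (a + 1 : ℝ) ≤ r / (r - 1) * r ^ a := by
  have hr1 : 0 < r - 1 := by linarith
  have hbernoulli : 1 + a * (r - 1) ≤ r ^ a := by
    simpa using one_add_mul_le_pow (a := r - 1) (by linarith) a
  have hone : 1 ≤ r / (r - 1) := (one_le_div hr1).2 (by linarith)
  calc (a + 1 : ℝ) ≤ r / (r - 1) + a * r := by nlinarith [(a.cast_nonneg : (0 : ℝ) ≤ a)]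
    _ = r / (r - 1) * (1 + a * (r - 1)) := by field_simp
    _ ≤ r / (r - 1) * r ^ a := by gcongr

lemma natCast_add_one_le_pow {r : ℝ} (hr : 2 ≤ r) (a : ℕ) : (a + 1 : ℝ) ≤ r ^ a :=
  calc (a + 1 : ℝ) ≤ 2 ^ a := by exact_mod_cast Nat.lt_two_pow_self
    _ ≤ r ^ a := pow_le_pow_left₀ (by norm_num) hr a

-- Only the primes `p < 2^{1/ε}` cost a factor: for the others `p^ε ≥ 2`, and `2^a ≥ a + 1`.
lemma natCast_add_one_le_ite_mul_rpow {ε : ℝ} (hε : 0 < ε) {p : ℕ} (hp : p.Prime) (a : ℕ) :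
    (a + 1 : ℝ) ≤ (if p < ⌈(2 : ℝ) ^ ε⁻¹⌉₊ then 2 ^ ε / (2 ^ ε - 1) else 1)
      * ((p : ℝ) ^ a) ^ ε := by
  have hp2 : (2 : ℝ) ≤ p := by exact_mod_cast hp.two_le
  rw [← rpow_pow_comm (by positivity)]
  split_ifs with hpN
  · calc (a + 1 : ℝ) ≤ 2 ^ ε / (2 ^ ε - 1) * ((2 : ℝ) ^ ε) ^ a :=
          natCast_add_one_le_div_mul_pow (one_lt_rpow (by norm_num) hε) a
      _ ≤ 2 ^ ε / (2 ^ ε - 1) * ((p : ℝ) ^ ε) ^ a := by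
          have h2ε : (1 : ℝ) < 2 ^ ε := one_lt_rpow (by norm_num) hε
          have : 0 ≤ (2 : ℝ) ^ ε / (2 ^ ε - 1) := div_nonneg (by positivity) (by linarith)
          gcongr
  · have h2 : (2 : ℝ) ≤ (p : ℝ) ^ ε := by
      have hN : (2 : ℝ) ^ ε⁻¹ ≤ p := (Nat.le_ceil _).trans (by exact_mod_cast not_lt.mp hpN)
      calc (2 : ℝ) = ((2 : ℝ) ^ ε⁻¹) ^ ε := by
            rw [← rpow_mul (by norm_num), inv_mul_cancel₀ hε.ne', rpow_one]
        _ ≤ (p : ℝ) ^ ε := by gcongr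
    rw [one_mul]
    exact natCast_add_one_le_pow h2 a

theorem exists_card_divisors_le_mul_rpow {ε : ℝ} (hε : 0 < ε) :
    ∃ C : ℝ, 0 ≤ C ∧ ∀ n : ℕ, (#n.divisors : ℝ) ≤ C * (n : ℝ) ^ ε := by
  set A : ℝ := 2 ^ ε / (2 ^ ε - 1)
  set N : ℕ := ⌈(2 : ℝ) ^ ε⁻¹⌉₊
  have h2ε : (1 : ℝ) < 2 ^ ε := one_lt_rpow (by norm_num) hε
  have hA : 1 ≤ A := (one_le_div (by linarith)).2 (by linarith)
  refine ⟨A ^ N, by positivity, fun n => ?_⟩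
  rcases eq_or_ne n 0 with rfl | hn
  · simp [zero_rpow hε.ne']
  have hcount : ∏ p ∈ n.primeFactors, (if p < N then A else 1) ≤ A ^ N := by
    rw [prod_ite, prod_const, prod_const_one, mul_one]
    refine pow_le_pow_right₀ hA ((card_le_card fun p hp => ?_).trans (card_range N).le)
    simpa using (mem_filter.mp hp).2
  calc (#n.divisors : ℝ) = ∏ p ∈ n.primeFactors, ((n.factorization p : ℝ) + 1) := by
        rw [Nat.card_divisors hn]; push_cast; rfl
    _ ≤ ∏ p ∈ n.primeFactors,
          (if p < N then A else 1) * (((p : ℝ) ^ n.factorization p) ^ ε) :=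
        prod_le_prod (fun _ _ => by positivity) fun p hp =>
          natCast_add_one_le_ite_mul_rpow hε (Nat.prime_of_mem_primeFactors hp) _
    _ = (∏ p ∈ n.primeFactors, (if p < N then A else 1))
          * (∏ p ∈ n.primeFactors, (p : ℝ) ^ n.factorization p) ^ ε := by
        rw [prod_mul_distrib, finsetProd_rpow _ _ fun _ _ => by positivity]
    _ ≤ A ^ N * (n : ℝ) ^ ε := by
        have hn' : (∏ p ∈ n.primeFactors, (p : ℝ) ^ n.factorization p) = n := by
          exact_mod_cast (Nat.prod_primeFactors_pow_factorization hn).symm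
        rw [hn']
        gcongr

noncomputable def divisorSummatory (x : ℝ) : ℝ := ∑ n ∈ Icc 1 ⌊x⌋₊, (#n.divisors : ℝ)

lemma divDelta_eq_divisorSummatory_sub (x : ℝ) :
    divDelta x = divisorSummatory x - x * (log x + (2 * eulerMascheroniConstant - 1)) := by
  rw [divDelta, divisorSummatory, add_sub_assoc]

lemma monotone_divisorSummatory : Monotone divisorSummatory := fun _ _ hxy =>
  sum_le_sum_of_subset_of_nonneg (Icc_subset_Icc le_rfl (Nat.floor_mono hxy))
    fun _ _ _ => by positivity

lemma divisorSummatory_nonneg (x : ℝ) : 0 ≤ divisorSummatory x :=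
  sum_nonneg fun _ _ => by positivity

lemma divisorSummatory_sub_le {x y K : ℝ} (hx : 0 ≤ x) (hxy : x ≤ y)
    (hd : ∀ n : ℕ, (n : ℝ) ≤ y → (#n.divisors : ℝ) ≤ K) :
    divisorSummatory y - divisorSummatory x ≤ (y - x + 1) * K := by
  have hfloor : ⌊x⌋₊ ≤ ⌊y⌋₊ := Nat.floor_mono hxy
  have hK : 0 ≤ K := by simpa using hd 0 (by simpa using hx.trans hxy)
  have hsplit : divisorSummatory y - divisorSummatory x
      = ∑ n ∈ Ioc ⌊x⌋₊ ⌊y⌋₊, (#n.divisors : ℝ) := by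
    rw [divisorSummatory, divisorSummatory, show (1 : ℕ) = 0 + 1 from rfl,
      Icc_add_one_left_eq_Ioc, Icc_add_one_left_eq_Ioc,
      ← sum_Ioc_consecutive _ (Nat.zero_le _) hfloor, add_sub_cancel_left]
  have hcard : ((⌊y⌋₊ - ⌊x⌋₊ : ℕ) : ℝ) ≤ y - x + 1 := by
    rw [Nat.cast_sub hfloor]
    linarith [Nat.floor_le (hx.trans hxy), Nat.lt_floor_add_one x]
  calc divisorSummatory y - divisorSummatory x
      = ∑ n ∈ Ioc ⌊x⌋₊ ⌊y⌋₊, (#n.divisors : ℝ) := hsplit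
    _ ≤ #(Ioc ⌊x⌋₊ ⌊y⌋₊) • K := sum_le_card_nsmul _ _ _ fun n hn =>
        hd n ((Nat.cast_le.mpr (mem_Ioc.mp hn).2).trans (Nat.floor_le (hx.trans hxy)))
    _ ≤ (y - x + 1) * K := by
        rw [nsmul_eq_mul, Nat.card_Ioc]
        gcongr

lemma abs_mul_log_add_sub_le {c ε x y : ℝ} (hε : 0 < ε) (hx : 1 ≤ x) (hxy : x ≤ y) :
    |y * (log y + c) - x * (log x + c)| ≤ (1 / ε + 1 + |c|) * (y - x + 1) * y ^ ε := by
  have hx0 : 0 < x := by linarith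
  have hy0 : 0 < y := by linarith
  have hlogy : 0 ≤ log y := log_nonneg (hx.trans hxy)
  have hlog_sub : 0 ≤ log y - log x := sub_nonneg.mpr (log_le_log hx0 hxy)
  have hx_log_sub : x * (log y - log x) ≤ y - x := by
    rw [← log_div hy0.ne' hx0.ne']
    calc x * log (y / x) ≤ x * (y / x - 1) := by
          gcongr; exact log_le_sub_one_of_pos (by positivity)
      _ = y - x := by field_simp
  have hlin : |y * (log y + c) - x * (log x + c)| ≤ (y - x + 1) * (log y + 1 + |c|) := by
    have hid : y * (log y + c) - x * (log x + c) = (y - x) * (log y + c) + x * (log y - log x) := by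
      ring
    rw [hid, abs_le]
    constructor <;>
      nlinarith [le_abs_self c, neg_abs_le c, abs_nonneg c, mul_nonneg hx0.le hlog_sub]
  have hrpow : log y + 1 + |c| ≤ (1 / ε + 1 + |c|) * y ^ ε := by
    have hlog_le : log y ≤ 1 / ε * y ^ ε := by
      rw [one_div_mul_eq_div]; exact log_le_rpow_div (by linarith) hε
    have hone : 1 ≤ y ^ ε := one_le_rpow (hx.trans hxy) hε.le
    nlinarith [abs_nonneg c]
  calc |y * (log y + c) - x * (log x + c)| ≤ (y - x + 1) * (log y + 1 + |c|) := hlin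
    _ ≤ (y - x + 1) * ((1 / ε + 1 + |c|) * y ^ ε) := by gcongr
    _ = (1 / ε + 1 + |c|) * (y - x + 1) * y ^ ε := by ring

lemma abs_divDelta_sub_le {C ε x y : ℝ} (hε : 0 < ε)
    (hC : ∀ n : ℕ, (#n.divisors : ℝ) ≤ C * (n : ℝ) ^ ε) (hx : 1 ≤ x) (hxy : x ≤ y) :
    |divDelta y - divDelta x|
      ≤ (C + 1 / ε + 1 + |2 * eulerMascheroniConstant - 1|) * (y - x + 1) * y ^ ε := by
  have hC0 : 0 ≤ C := by simpa using (Nat.cast_nonneg _).trans (hC 1)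
  have hsum_mono : 0 ≤ divisorSummatory y - divisorSummatory x :=
    sub_nonneg.mpr (monotone_divisorSummatory hxy)
  have hsum : divisorSummatory y - divisorSummatory x ≤ C * (y - x + 1) * y ^ ε := by
    rw [mul_comm C, mul_assoc]
    exact divisorSummatory_sub_le (by linarith) hxy fun n hn =>
      (hC n).trans (by gcongr)
  have hmain := abs_mul_log_add_sub_le (c := 2 * eulerMascheroniConstant - 1) hε hx hxy
  rw [divDelta_eq_divisorSummatory_sub, divDelta_eq_divisorSummatory_sub]
  rw [abs_le] at hmain ⊢
  constructor <;> nlinarith [hmain.1, hmain.2]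

lemma abs_divDeltaStar_sub_le {K ε x y : ℝ} (hε : 0 ≤ ε)
    (hΔ : ∀ x y : ℝ, 1 ≤ x → x ≤ y → |divDelta y - divDelta x| ≤ K * (y - x + 1) * y ^ ε)
    (hx : 1 ≤ x) (hxy : x ≤ y) :
    |divDeltaStar y - divDeltaStar x| ≤ 14 * 4 ^ ε * K * (y - x + 1) * y ^ ε := by
  have hK : 0 ≤ K := by simpa using (abs_nonneg _).trans (hΔ 1 1 le_rfl le_rfl)
  have hscaled : ∀ k : ℝ, 1 ≤ k → k ≤ 4 →
      |divDelta (k * y) - divDelta (k * x)| ≤ 4 * 4 ^ ε * K * (y - x + 1) * y ^ ε := by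
    intro k hk1 hk4
    have hy : 0 ≤ y := by linarith
    calc |divDelta (k * y) - divDelta (k * x)| ≤ K * (k * y - k * x + 1) * (k * y) ^ ε :=
          hΔ _ _ (by nlinarith) (by gcongr)
      _ ≤ K * (4 * (y - x + 1)) * (4 ^ ε * y ^ ε) := by
          rw [mul_rpow (by linarith) hy]
          gcongr
          nlinarith
      _ = 4 * 4 ^ ε * K * (y - x + 1) * y ^ ε := by ring
  have h1 := hscaled 1 le_rfl (by norm_num)
  have h2 := hscaled 2 (by norm_num) (by norm_num)
  have h4 := hscaled 4 (by norm_num) le_rfl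
  rw [one_mul, one_mul] at h1
  rw [divDeltaStar, divDeltaStar]
  rw [abs_le] at h1 h2 h4 ⊢
  constructor <;> linarith [h1.1, h1.2, h2.1, h2.2, h4.1, h4.2]

lemma continuous_mul_log_add (c : ℝ) : Continuous fun x : ℝ => x * (log x + c) :=
  (continuous_mul_log.add (continuous_id.mul continuous_const)).congr fun x =>
    (mul_add x (log x) c).symm

lemma mul_log_div_two_pi_eq (t : ℝ) :
    t * (log (t / (2 * π)) + 2 * eulerMascheroniConstant - 1)
      = 2 * π * (t / (2 * π) * (log (t / (2 * π)) + (2 * eulerMascheroniConstant - 1))) := by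
  field_simp
  ring

lemma continuous_norm_riemannZeta_critical_sq :
    Continuous fun t : ℝ => ‖riemannZeta (1 / 2 + Complex.I * t)‖ ^ 2 := by
  have hne : ∀ t : ℝ, (1 / 2 : ℂ) + Complex.I * t ≠ 1 := fun t h => by
    simpa using congrArg Complex.re h
  refine (continuous_iff_continuousAt.2 fun t => ?_).norm.pow 2
  exact (differentiableAt_riemannZeta (hne t)).continuousAt.comp
    (f := fun s : ℝ => (1 / 2 : ℂ) + Complex.I * s) (by fun_prop : Continuous _).continuousAt

lemma continuous_zetaE : Continuous zetaE := by
  have hmain : Continuous fun t : ℝ =>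
      t * (log (t / (2 * π)) + 2 * eulerMascheroniConstant - 1) := by
    simp only [mul_log_div_two_pi_eq]
    exact continuous_const.mul ((continuous_mul_log_add _).comp (continuous_id.div_const _))
  exact (intervalIntegral.continuous_primitive
    (fun a b => continuous_norm_riemannZeta_critical_sq.intervalIntegrable a b) 0).sub hmain

lemma zetaE_sub_le {s t : ℝ} (hst : s ≤ t) :
    zetaE s - zetaE t
      ≤ 2 * π * (t / (2 * π) * (log (t / (2 * π)) + (2 * eulerMascheroniConstant - 1))
        - s / (2 * π) * (log (s / (2 * π)) + (2 * eulerMascheroniConstant - 1))) := by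
  have hint := fun a b =>
    continuous_norm_riemannZeta_critical_sq.intervalIntegrable (μ := volume) a b
  have hmono : 0 ≤ ∫ x in s..t, ‖riemannZeta (1 / 2 + Complex.I * x)‖ ^ 2 :=
    intervalIntegral.integral_nonneg hst fun _ _ => by positivity
  rw [← intervalIntegral.integral_interval_sub_left (hint 0 t) (hint 0 s)] at hmono
  rw [zetaE, zetaE, mul_log_div_two_pi_eq, mul_log_div_two_pi_eq]
  linarith

lemma intervalIntegrable_divDelta_comp {φ : ℝ → ℝ} (hφm : Monotone φ) (hφc : Continuous φ)
    (a b : ℝ) : IntervalIntegrable (fun t => divDelta (φ t)) volume a b := by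
  simp only [divDelta_eq_divisorSummatory_sub]
  exact (monotone_divisorSummatory.comp hφm).intervalIntegrable.sub
    (((continuous_mul_log_add _).comp hφc).intervalIntegrable a b)

lemma exists_abs_divDelta_comp_le {φ : ℝ → ℝ} (hφm : Monotone φ) (hφc : Continuous φ)
    (a b : ℝ) : ∃ M, ∀ t ∈ Set.Icc a b, |divDelta (φ t)| ≤ M := by
  obtain ⟨M, hM⟩ := isCompact_Icc.exists_bound_of_continuousOn
    ((continuous_mul_log_add (2 * eulerMascheroniConstant - 1)).comp hφc).continuousOn
  refine ⟨divisorSummatory (φ b) + M, fun t ht => ?_⟩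
  rw [divDelta_eq_divisorSummatory_sub]
  calc _ ≤ |divisorSummatory (φ t)| + |φ t * (log (φ t) + (2 * eulerMascheroniConstant - 1))| :=
        abs_sub _ _
    _ ≤ divisorSummatory (φ b) + M := by
        rw [abs_of_nonneg (divisorSummatory_nonneg _)]
        exact add_le_add (monotone_divisorSummatory (hφm ht.2)) (hM t ht)

lemma monotone_mul_div_two_pi {k : ℝ} (hk : 0 ≤ k) : Monotone fun t : ℝ => k * (t / (2 * π)) :=
  fun _ _ h => by dsimp only; gcongr

lemma continuous_mul_div_two_pi {k : ℝ} : Continuous fun t : ℝ => k * (t / (2 * π)) := by fun_prop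

lemma intervalIntegrable_zetaEStar (a b : ℝ) : IntervalIntegrable zetaEStar volume a b := by
  have hΔ : ∀ k : ℝ, 0 ≤ k →
      IntervalIntegrable (fun t => divDelta (k * (t / (2 * π)))) volume a b := fun k hk =>
    intervalIntegrable_divDelta_comp (monotone_mul_div_two_pi hk) continuous_mul_div_two_pi a b
  have h1 := hΔ 1 zero_le_one
  simp only [one_mul] at h1
  exact (continuous_zetaE.intervalIntegrable a b).sub
    (((h1.neg.add ((hΔ 2 zero_le_two).const_mul 2)).sub
      ((hΔ 4 (by norm_num)).const_mul (1 / 2))).const_mul (2 * π))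

lemma exists_abs_zetaEStar_le (a b : ℝ) : ∃ M, ∀ t ∈ Set.Icc a b, |zetaEStar t| ≤ M := by
  have hΔ : ∀ k : ℝ, 0 ≤ k → ∃ M, ∀ t ∈ Set.Icc a b, |divDelta (k * (t / (2 * π)))| ≤ M :=
    fun k hk =>
      exists_abs_divDelta_comp_le (monotone_mul_div_two_pi hk) continuous_mul_div_two_pi a b
  obtain ⟨M₁, hM₁⟩ := hΔ 1 zero_le_one
  obtain ⟨M₂, hM₂⟩ := hΔ 2 zero_le_two
  obtain ⟨M₄, hM₄⟩ := hΔ 4 (by norm_num)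
  obtain ⟨M, hM⟩ := isCompact_Icc.exists_bound_of_continuousOn continuous_zetaE.continuousOn
  refine ⟨M + 2 * π * (M₁ + 2 * M₂ + M₄ / 2), fun t ht => ?_⟩
  have h1 := abs_le.mp (hM₁ t ht)
  have h2 := abs_le.mp (hM₂ t ht)
  have h4 := abs_le.mp (hM₄ t ht)
  have hz := abs_le.mp (hM t ht)
  rw [one_mul] at h1
  rw [zetaEStar, divDeltaStar, abs_le]
  constructor <;> nlinarith [pi_pos]

lemma integral_zetaEStar (a b : ℝ) :
    ∫ t in a..b, zetaEStar t = Rerr b - Rerr a + 3 * π / 4 * (b - a) := by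
  rw [Rerr, Rerr, ← intervalIntegral.integral_interval_sub_left
    (intervalIntegrable_zetaEStar 0 b) (intervalIntegrable_zetaEStar 0 a)]
  ring

theorem exists_zetaEStar_sub_le {ε : ℝ} (hε : 0 < ε) :
    ∃ K, 0 ≤ K ∧ ∀ s t : ℝ, 2 * π ≤ s → s ≤ t →
      zetaEStar s - zetaEStar t ≤ K * (t - s + 1) * t ^ ε := by
  obtain ⟨C, hC0, hC⟩ := exists_card_divisors_le_mul_rpow hε
  set c := 2 * eulerMascheroniConstant - 1
  set K₁ := 1 / ε + 1 + |c|
  set K₂ := 14 * 4 ^ ε * (C + 1 / ε + 1 + |c|)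
  refine ⟨2 * π * (K₁ + K₂), by positivity, fun s t hs hst => ?_⟩
  have hπ : 1 ≤ 2 * π := by linarith [pi_gt_three]
  set x := s / (2 * π)
  set y := t / (2 * π)
  have hx : 1 ≤ x := (one_le_div (by positivity)).2 hs
  have hxy : x ≤ y := div_le_div_of_nonneg_right hst (by positivity)
  have hm := (abs_le.mp (abs_mul_log_add_sub_le (c := c) hε hx hxy)).2
  have hstar := (abs_le.mp (abs_divDeltaStar_sub_le (x := x) (y := y) hε.le
    (fun _ _ => abs_divDelta_sub_le hε hC) hx hxy)).2
  have hscale : (y - x + 1) * y ^ ε ≤ (t - s + 1) * t ^ ε := by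
    have hyx : y - x ≤ t - s := by
      rw [← sub_div]; exact div_le_self (by linarith) hπ
    have hyt : y ≤ t := div_le_self (by linarith) hπ
    exact mul_le_mul (by linarith) (rpow_le_rpow (by linarith) hyt hε.le)
      (rpow_nonneg (by linarith) _) (by linarith)
  have hE := zetaE_sub_le hst
  calc zetaEStar s - zetaEStar t
      = (zetaE s - zetaE t) + 2 * π * (divDeltaStar y - divDeltaStar x) := by
        simp only [zetaEStar]; ring
    _ ≤ 2 * π * (K₁ * (y - x + 1) * y ^ ε) + 2 * π * (K₂ * (y - x + 1) * y ^ ε) := by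
        gcongr
        exact hE.trans (by gcongr)
    _ = 2 * π * (K₁ + K₂) * ((y - x + 1) * y ^ ε) := by ring
    _ ≤ 2 * π * (K₁ + K₂) * ((t - s + 1) * t ^ ε) := by gcongr
    _ = 2 * π * (K₁ + K₂) * (t - s + 1) * t ^ ε := by ring

lemma le_integral_div_add_of_sub_le {f : ℝ → ℝ} {a b B : ℝ} (hab : a < b)
    (hf : IntervalIntegrable f volume a b) (h : ∀ t ∈ Set.Icc a b, f a - f t ≤ B) :
    f a ≤ (∫ t in a..b, f t) / (b - a) + B := by
  have hint := intervalIntegral.integral_mono_on hab.le intervalIntegrable_const hf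
    fun t ht => show f a - B ≤ f t by linarith [h t ht]
  rw [intervalIntegral.integral_const, smul_eq_mul] at hint
  rw [← sub_le_iff_le_add, le_div_iff₀ (sub_pos.2 hab)]
  linarith

lemma integral_div_sub_le_of_sub_le {f : ℝ → ℝ} {a b B : ℝ} (hab : a < b)
    (hf : IntervalIntegrable f volume a b) (h : ∀ t ∈ Set.Icc a b, f t - f b ≤ B) :
    (∫ t in a..b, f t) / (b - a) - B ≤ f b := by
  have hint := intervalIntegral.integral_mono_on hab.le hf intervalIntegrable_const
    fun t ht => show f t ≤ f b + B by linarith [h t ht]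
  rw [intervalIntegral.integral_const, smul_eq_mul] at hint
  rw [sub_le_iff_le_add, div_le_iff₀ (sub_pos.2 hab)]
  linarith

lemma abs_sub_le_of_integral_eq {f R : ℝ → ℝ} {c T H B ρ : ℝ} (hH : 0 < H)
    (hf : ∀ a b, IntervalIntegrable f volume a b)
    (hprim : ∀ a b, ∫ t in a..b, f t = R b - R a + c * (b - a))
    (hdrop : ∀ s t, T - H ≤ s → s ≤ t → t ≤ T + H → f s - f t ≤ B)
    (hR : ∀ u, T - H ≤ u → u ≤ T + H → |R u| ≤ ρ) :
    |f T - c| ≤ B + 2 * ρ / H := by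
  have hup := le_integral_div_add_of_sub_le (by linarith) (hf T (T + H))
    fun t ht => hdrop T t (by linarith) ht.1 ht.2
  have hdown := integral_div_sub_le_of_sub_le (by linarith) (hf (T - H) T)
    fun t ht => hdrop t T ht.1 ht.2 (by linarith)
  rw [hprim, add_sub_cancel_left] at hup
  rw [hprim, sub_sub_cancel] at hdown
  have hRH := abs_le.mp (hR (T + H) (by linarith) le_rfl)
  have hR0 := abs_le.mp (hR T (by linarith) (by linarith))
  have hRH' := abs_le.mp (hR (T - H) le_rfl (by linarith))
  have hsplit : ∀ a b, (R b - R a + c * H) / H = (R b - R a) / H + c := fun a b => by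
    field_simp
  rw [hsplit] at hup hdown
  have hupper : (R (T + H) - R T) / H ≤ 2 * ρ / H :=
    div_le_div_of_nonneg_right (by linarith) hH.le
  have hlower : -(2 * ρ / H) ≤ (R T - R (T - H)) / H := by
    rw [← neg_div]; exact div_le_div_of_nonneg_right (by linarith) hH.le
  rw [abs_le]
  constructor <;> linarith

lemma two_le_rpow_one_fourth {T : ℝ} (hT : 16 ≤ T) : 2 ≤ T ^ (1 / 4 : ℝ) :=
  calc (2 : ℝ) = 16 ^ (1 / 4 : ℝ) := by
        rw [show (16 : ℝ) = 2 ^ (4 : ℝ) by norm_num, ← rpow_mul (by norm_num)]; norm_num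
    _ ≤ T ^ (1 / 4 : ℝ) := rpow_le_rpow (by norm_num) hT (by norm_num)

lemma eight_mul_rpow_one_fourth_le {T : ℝ} (hT : 16 ≤ T) : 8 * T ^ (1 / 4 : ℝ) ≤ T := by
  have hH4 : (T ^ (1 / 4 : ℝ)) ^ 4 = T := by
    rw [← rpow_natCast, ← rpow_mul (by linarith)]; norm_num
  nlinarith [pow_le_pow_left₀ (by norm_num) (two_le_rpow_one_fourth hT) 3,
    rpow_pos_of_pos (by linarith : 0 < T) (1 / 4 : ℝ)]

lemma abs_zetaEStar_le_of_sixteen_le {K C ε T : ℝ} (hε : 0 ≤ ε) (hK : 0 ≤ K) (hC : 0 ≤ C)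
    (hdrop : ∀ s t : ℝ, 2 * π ≤ s → s ≤ t →
      zetaEStar s - zetaEStar t ≤ K * (t - s + 1) * t ^ ε)
    (hR : ∀ T : ℝ, 2 ≤ T → |Rerr T| ≤ C * T ^ (1 / 2 + ε : ℝ)) (hT : 16 ≤ T) :
    |zetaEStar T| ≤ (3 + 3 * 2 ^ ε * K + 2 * 2 ^ (1 / 2 + ε : ℝ) * C) * T ^ (1 / 4 + ε : ℝ) := by
  have hT0 : 0 < T := by linarith
  -- the averaging length `H = T^{1/4}` balances `T^{1/2+ε} / H` against `H T^ε`
  set H := T ^ (1 / 4 : ℝ) with hH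
  have hH0 : 0 < H := rpow_pos_of_pos hT0 _
  have hH2 : 2 ≤ H := two_le_rpow_one_fourth hT
  have h8H : 8 * H ≤ T := eight_mul_rpow_one_fourth_le hT
  have hHT : H * T ^ ε = T ^ (1 / 4 + ε : ℝ) := by rw [hH, ← rpow_add hT0]
  have hT2 : T ^ (1 / 2 + ε : ℝ) = H * T ^ (1 / 4 + ε : ℝ) := by
    rw [hH, ← rpow_add hT0]; ring_nf
  have hπ : 2 * π ≤ 8 := by linarith [pi_lt_four]
  have hdrop' : ∀ s t, T - H ≤ s → s ≤ t → t ≤ T + H →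
      zetaEStar s - zetaEStar t ≤ 3 * K * H * (2 * T) ^ ε := fun s t hs hst ht =>
    calc zetaEStar s - zetaEStar t ≤ K * (t - s + 1) * t ^ ε := hdrop s t (by linarith) hst
      _ ≤ K * (3 * H) * (2 * T) ^ ε :=
          mul_le_mul (mul_le_mul_of_nonneg_left (by linarith) hK)
            (rpow_le_rpow (by linarith) (by linarith) hε) (rpow_nonneg (by linarith) _)
            (by positivity)
      _ = 3 * K * H * (2 * T) ^ ε := by ring
  have hR' : ∀ u, T - H ≤ u → u ≤ T + H → |Rerr u| ≤ C * (2 * T) ^ (1 / 2 + ε : ℝ) :=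
    fun u hu hu' => (hR u (by linarith)).trans
      (mul_le_mul_of_nonneg_left (rpow_le_rpow (by linarith) (by linarith) (by positivity)) hC)
  have hmain := abs_sub_le_of_integral_eq hH0 intervalIntegrable_zetaEStar integral_zetaEStar
    hdrop' hR'
  have h3 : 3 * π / 4 ≤ 3 * T ^ (1 / 4 + ε : ℝ) := by
    nlinarith [pi_lt_four, one_le_rpow (x := T) (by linarith) (by positivity : (0 : ℝ) ≤ 1 / 4 + ε)]
  rw [mul_rpow (by norm_num) hT0.le, mul_rpow (by norm_num) hT0.le, hT2] at hmain
  calc |zetaEStar T| ≤ |zetaEStar T - 3 * π / 4| + 3 * π / 4 := by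
        have := abs_sub_abs_le_abs_sub (zetaEStar T) (3 * π / 4)
        rw [abs_of_pos (show (0 : ℝ) < 3 * π / 4 by positivity)] at this
        linarith
    _ ≤ 3 * K * H * (2 ^ ε * T ^ ε)
          + 2 * (C * (2 ^ (1 / 2 + ε : ℝ) * (H * T ^ (1 / 4 + ε : ℝ)))) / H
          + 3 * T ^ (1 / 4 + ε : ℝ) := add_le_add hmain h3
    _ = (3 + 3 * 2 ^ ε * K + 2 * 2 ^ (1 / 2 + ε : ℝ) * C) * T ^ (1 / 4 + ε : ℝ) := by
        rw [← hHT]; field_simp; ring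

theorem R_conjecture_implies_EStar_bound
    (h : ∀ ε : ℝ, 0 < ε → ∃ C : ℝ, 0 < C ∧ ∀ T : ℝ, 2 ≤ T →
      |Rerr T| ≤ C * T ^ (1/2 + ε : ℝ)) :
    ∀ ε : ℝ, 0 < ε → ∃ C : ℝ, 0 < C ∧ ∀ T : ℝ, 2 ≤ T →
      |zetaEStar T| ≤ C * T ^ (1/4 + ε : ℝ) := by
  intro ε hε
  obtain ⟨C, hC, hR⟩ := h ε hε
  obtain ⟨K, hK, hdrop⟩ := exists_zetaEStar_sub_le hε
  obtain ⟨M, hM⟩ := exists_abs_zetaEStar_le 2 16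
  set A := 3 + 3 * 2 ^ ε * K + 2 * 2 ^ (1 / 2 + ε : ℝ) * C
  have hA : 0 < A := by positivity
  refine ⟨|M| + A, by positivity, fun T hT => ?_⟩
  have hpow : 1 ≤ T ^ (1 / 4 + ε : ℝ) := one_le_rpow (by linarith) (by positivity)
  rcases le_or_gt T 16 with hT16 | hT16
  · calc |zetaEStar T| ≤ |M| := (hM T ⟨hT, hT16⟩).trans (le_abs_self M)
      _ ≤ (|M| + A) * T ^ (1 / 4 + ε : ℝ) := by nlinarith [abs_nonneg M]
  · calc |zetaEStar T| ≤ A * T ^ (1 / 4 + ε : ℝ) :=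
          abs_zetaEStar_le_of_sixteen_le hε.le hK hC.le hdrop hR hT16.le
      _ ≤ (|M| + A) * T ^ (1 / 4 + ε : ℝ) := by nlinarith [abs_nonneg M]
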